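/- arXiv:1710.05508 — 2 statements merged into one kernel-verified Lean document; each statement's English description precedes it below -/
import Mathlib

section
/- Let $q \ge 2$, $\theta > 0$, $\sigma \in (0, 1/2)$, $R > 0$, $\kappa \in (0,1)$. For $(x,t) \in \mathbb{R}^d \times [0, \theta R^2]$ define $\psi_0(t) = \sigma^2 R^2 + \frac{1-\sigma^2}{\theta} t$, $\psi_1(x,t) = (\psi_0(t) - |x|^2)^+$, $\xi = \psi_1/\psi_0$, and suppose coefficients $a_i \in [\kappa, 1/\kappa]$. Then on the set $\{\psi_1 > 0\}$, for $q \ge q_0(\kappa, \theta)$ sufficiently large, $\sum_{i=1}^d a_i \cdot 4(2x_i^2 - \psi_1)\psi_0^{-q} - \partial_t(\psi_1^2 \psi_0^{-q}) \ge \left(\kappa + \frac{q}{2\theta}\xi^2\right)\psi_0^{1-q}$. -/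
/-!
On `{ψ₁ > 0}` write `P = ψ₀(t)`, `u = ψ₁(t)` and `c = (1 - σ²)/θ ∈ [3/(4θ), 1/θ]`. After
multiplying by `P^{q+1}`, the bounds `κ ≤ aᵢ ≤ κ⁻¹` and `∑ xᵢ² = P - u` reduce the claim to the
nonnegativity of the binary quadratic form `7κ P² - B u P + q u²/(4θ)`, with
`B = 8κ + 4dκ⁻¹ + 2/θ`. Its discriminant `B² - 7κq/θ` is nonpositive as soon as
`q ≥ θB²/(7κ)`.
-/

open Set

theorem quadratic_form_nonneg {a b c : ℝ} (ha : 0 < a) (hdisc : b ^ 2 ≤ 4 * a * c) (x y : ℝ) :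
    0 ≤ a * x ^ 2 + b * x * y + c * y ^ 2 := by
  have h : 0 ≤ (4 * a * c - b ^ 2) * y ^ 2 := mul_nonneg (by linarith) (sq_nonneg y)
  nlinarith [sq_nonneg (2 * a * x + b * y)]

theorem sum_mul_four_mul_two_sq_sub_ge {ι : Type*} [Fintype ι] {a x : ι → ℝ} {κ K u : ℝ}
    (ha : ∀ i, a i ∈ Icc κ K) (hu : 0 ≤ u) :
    8 * κ * ∑ i, x i ^ 2 - 4 * Fintype.card ι * K * u ≤ ∑ i, a i * (4 * (2 * x i ^ 2 - u)) := by
  have hterm (i : ι) : 8 * κ * x i ^ 2 - 4 * K * u ≤ a i * (4 * (2 * x i ^ 2 - u)) := by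
    obtain ⟨hκa, haK⟩ := ha i
    nlinarith [mul_le_mul_of_nonneg_right hκa (sq_nonneg (x i)),
      mul_le_mul_of_nonneg_right haK hu]
  calc 8 * κ * ∑ i, x i ^ 2 - 4 * Fintype.card ι * K * u
      = ∑ i, (8 * κ * x i ^ 2 - 4 * K * u) := by
        rw [Finset.sum_sub_distrib, ← Finset.mul_sum, Finset.sum_const, Finset.card_univ,
          nsmul_eq_mul]
        ring
    _ ≤ _ := Finset.sum_le_sum fun i _ => hterm i

theorem hasDerivAt_max_sub_sq_mul_rpow {f : ℝ → ℝ} {c t S q : ℝ} (hf : HasDerivAt f c t)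
    (hS : S < f t) (hpos : 0 < f t) :
    HasDerivAt (fun s => max (f s - S) 0 ^ 2 * f s ^ (-q))
      (2 * (f t - S) * c * f t ^ (-q) - q * c * (f t - S) ^ 2 * f t ^ (-q - 1)) t := by
  have hsmooth : HasDerivAt (fun s => (f s - S) ^ 2 * f s ^ (-q))
      (2 * (f t - S) * c * f t ^ (-q) - q * c * (f t - S) ^ 2 * f t ^ (-q - 1)) t := by
    refine (((hf.sub_const S).fun_pow 2).fun_mul (hf.rpow_const (Or.inl hpos.ne'))).congr_deriv ?_
    norm_num
    ring
  have hnear : ∀ᶠ s in nhds t, S < f s := hf.continuousAt.eventually (eventually_gt_nhds hS)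
  refine hsmooth.congr_of_eventuallyEq ?_
  filter_upwards [hnear] with s hs
  rw [max_eq_left (sub_nonneg.mpr hs.le)]

section Barrier

variable {κ θ c q n P S A : ℝ}

theorem barrier_polynomial_bound (hκ : 0 < κ) (hθ : 0 < θ) (hc₁ : 3 / (4 * θ) ≤ c)
    (hc₂ : c ≤ 1 / θ) (hq : θ * (8 * κ + 4 * n * κ⁻¹ + 2 / θ) ^ 2 / (7 * κ) ≤ q)
    (hP : 0 ≤ P) (hSP : S < P) (hA : 8 * κ * S - 4 * n * κ⁻¹ * (P - S) ≤ A) :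
    κ * P ^ 2 + q / (2 * θ) * (P - S) ^ 2
      ≤ A * P - 2 * (P - S) * c * P + q * c * (P - S) ^ 2 := by
  set B := 8 * κ + 4 * n * κ⁻¹ + 2 / θ
  have hq₀ : 0 ≤ q := le_trans (by positivity) hq
  have hdisc : (-B) ^ 2 ≤ 4 * (7 * κ) * (q / (4 * θ)) := by
    rw [div_le_iff₀ (by positivity)] at hq
    rw [neg_sq, show 4 * (7 * κ) * (q / (4 * θ)) = q * (7 * κ) / θ by field_simp]
    rw [le_div_iff₀ hθ]
    linarith
  have hform := quadratic_form_nonneg (by positivity) hdisc P (P - S)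
  have hAP := mul_le_mul_of_nonneg_right hA hP
  have hcP : 2 * (P - S) * c * P ≤ 2 * (P - S) * (1 / θ) * P := by
    have := (sub_pos.mpr hSP).le
    gcongr
  have hcq : q * (3 / (4 * θ)) * (P - S) ^ 2 ≤ q * c * (P - S) ^ 2 := by
    gcongr
  linear_combination hform + hAP + hcP + hcq

theorem barrier_rpow_bound (hκ : 0 < κ) (hθ : 0 < θ) (hc₁ : 3 / (4 * θ) ≤ c)
    (hc₂ : c ≤ 1 / θ) (hq : θ * (8 * κ + 4 * n * κ⁻¹ + 2 / θ) ^ 2 / (7 * κ) ≤ q)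
    (hP : 0 < P) (hSP : S < P) (hA : 8 * κ * S - 4 * n * κ⁻¹ * (P - S) ≤ A) :
    (κ + q / (2 * θ) * ((P - S) / P) ^ 2) * P ^ (1 - q)
      ≤ A * P ^ (-q) - (2 * (P - S) * c * P ^ (-q) - q * c * (P - S) ^ 2 * P ^ (-q - 1)) := by
  have hP₀ : P ^ (-q) = P * P ^ (-q - 1) := by
    rw [Real.rpow_sub hP, Real.rpow_one]
    field_simp
  have hP₁ : P ^ (1 - q) = P ^ 2 * P ^ (-q - 1) := by
    rw [← Real.rpow_natCast, ← Real.rpow_add hP]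
    congr 1
    push_cast
    ring
  calc (κ + q / (2 * θ) * ((P - S) / P) ^ 2) * P ^ (1 - q)
      = (κ * P ^ 2 + q / (2 * θ) * (P - S) ^ 2) * P ^ (-q - 1) := by
        rw [hP₁]
        field_simp
    _ ≤ (A * P - 2 * (P - S) * c * P + q * c * (P - S) ^ 2) * P ^ (-q - 1) := by
        have := barrier_polynomial_bound hκ hθ hc₁ hc₂ hq hP.le hSP hA
        gcongr
    _ = _ := by
        rw [hP₀]
        ring

end Barrier

/-- key differential inequality for the barrier `ψ = ψ₁² ψ₀^{-q}`. -/
theorem stmt11 (d : ℕ) (κ θ : ℝ) (hκ : κ ∈ Set.Ioo (0 : ℝ) 1) (hθ : 0 < θ) :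
    ∃ q0 : ℝ, ∀ q : ℝ, q0 ≤ q → 2 ≤ q →
      ∀ σ R : ℝ, σ ∈ Set.Ioo (0 : ℝ) (1 / 2) → 0 < R →
      ∀ a : Fin d → ℝ, (∀ i, a i ∈ Set.Icc κ κ⁻¹) →
      ∀ x : Fin d → ℝ, ∀ t ∈ Set.Icc (0 : ℝ) (θ * R ^ 2),
      let ψ0 : ℝ → ℝ := fun s => σ ^ 2 * R ^ 2 + (1 - σ ^ 2) / θ * s
      let ψ1 : ℝ → ℝ := fun s => max (ψ0 s - ∑ i, (x i) ^ 2) 0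
      0 < ψ1 t →
      (∑ i, a i * (4 * (2 * (x i) ^ 2 - ψ1 t))) * ψ0 t ^ (-q)
          - deriv (fun s => ψ1 s ^ 2 * ψ0 s ^ (-q)) t
        ≥ (κ + q / (2 * θ) * (ψ1 t / ψ0 t) ^ 2) * ψ0 t ^ (1 - q) := by
  refine ⟨θ * (8 * κ + 4 * d * κ⁻¹ + 2 / θ) ^ 2 / (7 * κ), ?_⟩
  intro q hq _ σ R hσ _ a ha x t _ ψ0 ψ1 hψ1
  set S := ∑ i, x i ^ 2
  have hSψ0 : S < ψ0 t := by simpa [ψ1] using hψ1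
  have hψ0 : 0 < ψ0 t := lt_of_le_of_lt (by positivity) hSψ0
  have hψ1_eq : ψ1 t = ψ0 t - S := max_eq_left (sub_nonneg.mpr hSψ0.le)
  have hψ0_deriv : HasDerivAt ψ0 ((1 - σ ^ 2) / θ) t :=
    (((hasDerivAt_id t).const_mul _).const_add _).congr_deriv (mul_one _)
  have hσ_sq : σ ^ 2 < 1 / 4 := by nlinarith [hσ.1, hσ.2]
  have hc₁ : 3 / (4 * θ) ≤ (1 - σ ^ 2) / θ := by
    rw [div_le_div_iff₀ (by positivity) hθ]
    nlinarith
  have hc₂ : (1 - σ ^ 2) / θ ≤ 1 / θ := by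
    gcongr
    linarith [sq_nonneg σ]
  have hA := sum_mul_four_mul_two_sq_sub_ge (x := x) ha (sub_nonneg.mpr hSψ0.le)
  rw [Fintype.card_fin] at hA
  rw [(hasDerivAt_max_sub_sq_mul_rpow hψ0_deriv hSψ0 hψ0).deriv, hψ1_eq]
  exact barrier_rpow_bound hκ.1 hθ hc₁ hc₂ hq hψ0 hSψ0 (by linarith)
end

section
/- Let $\mathcal{G}$ be a countable collection of pairwise disjoint half-open intervals in $\mathbb{R}$, and for each interval $I = (t - r^2, t) \in \mathcal{G}$ (with right endpoint $t$ and length $r^2$) define $I^* = (t, t + 4r^2/\eta)$ and $I^{-1} \subset (t - 4r^2, t + 3r^2)$, where $\eta \in (0, 3/4)$. Suppose the union $\bigcup_{I\in\mathcal{G}} I^*$ equals a single interval $(t_m, \tau_m)$. Then $\bigcup_{I\in\mathcal{G}} I^{-1} \subset \big(t_m - \eta(\tau_m - t_m),\ \tau_m\big)$, and consequently the Lebesgue measure satisfies $\big|\bigcup_{I\in\mathcal{G}} I^{-1}\big| \le (1+\eta)\big|\bigcup_{I\in\mathcal{G}} I^*\big|$. -/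
open Set MeasureTheory
open scoped ENNReal

/-! Each `I*` lies inside `(tm, τm)`, so `tm ≤ t` and `4 r² / η ≤ τm - tm`. The first gives
`t - 4 r² ≥ tm - η (τm - tm)`, and `3 r² ≤ 4 r² / η` (as `η ≤ 4/3`) gives `t + 3 r² ≤ τm`. Hence every
`I⁻¹` lies in `(tm - η (τm - tm), τm)`, an interval of length `(1 + η) (τm - tm)`. -/

theorem Ioo_subset_Ioo_of_Ioo_add_div_subset {η s a tm τm : ℝ} (hη₀ : 0 < η) (hη : η ≤ 4 / 3)
    (hs : 0 < s) (h : Ioo a (a + 4 * s / η) ⊆ Ioo tm τm) :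
    Ioo (a - 4 * s) (a + 3 * s) ⊆ Ioo (tm - η * (τm - tm)) τm := by
  have hlen : 0 < 4 * s / η := by positivity
  obtain ⟨hleft, hright⟩ := (Ioo_subset_Ioo_iff (by linarith)).1 h
  have h4 : 4 * s ≤ η * (τm - tm) := by
    rw [← div_le_iff₀' hη₀]
    linarith
  have h3 : 3 * s ≤ 4 * s / η := by
    rw [le_div_iff₀ hη₀]
    nlinarith
  exact Ioo_subset_Ioo (by linarith) (by linarith)

theorem Real.volume_Ioo_sub_mul_sub {a b c : ℝ} (hc : 0 ≤ 1 + c) :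
    volume (Ioo (a - c * (b - a)) b) = ENNReal.ofReal (1 + c) * volume (Ioo a b) := by
  rw [Real.volume_Ioo, Real.volume_Ioo, ← ENNReal.ofReal_mul hc]
  ring_nf

theorem stmt17_general {ι : Type*} (η : ℝ) (hη : η ∈ Set.Ioo (0 : ℝ) (3 / 4))
    (t r : ι → ℝ) (hr : ∀ i, 0 < r i)
    (Iinv : ι → Set ℝ)
    (hIinv : ∀ i, Iinv i ⊆ Set.Ioo (t i - 4 * r i ^ 2) (t i + 3 * r i ^ 2))
    (tm τm : ℝ)
    (hunion : (⋃ i, Set.Ioo (t i) (t i + 4 * r i ^ 2 / η)) = Set.Ioo tm τm) :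
    (⋃ i, Iinv i) ⊆ Set.Ioo (tm - η * (τm - tm)) τm ∧
      volume (⋃ i, Iinv i)
        ≤ ENNReal.ofReal (1 + η) * volume (⋃ i, Set.Ioo (t i) (t i + 4 * r i ^ 2 / η)) := by
  obtain ⟨hη₀, hη⟩ := hη
  have hsub : (⋃ i, Iinv i) ⊆ Ioo (tm - η * (τm - tm)) τm :=
    iUnion_subset fun i => (hIinv i).trans <|
      Ioo_subset_Ioo_of_Ioo_add_div_subset hη₀ (by linarith) (pow_pos (hr i) 2)
        (hunion ▸ subset_iUnion (fun j => Ioo (t j) (t j + 4 * r j ^ 2 / η)) i)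
  refine ⟨hsub, ?_⟩
  calc volume (⋃ i, Iinv i) ≤ volume (Ioo (tm - η * (τm - tm)) τm) := measure_mono hsub
    _ = ENNReal.ofReal (1 + η) * volume (⋃ i, Ioo (t i) (t i + 4 * r i ^ 2 / η)) := by
      rw [Real.volume_Ioo_sub_mul_sub (by linarith), hunion]

/-- one-dimensional covering estimate in the parabolic
Calderón–Zygmund decomposition. -/
theorem stmt17 {ι : Type*} [Countable ι] (η : ℝ) (hη : η ∈ Set.Ioo (0 : ℝ) (3 / 4))
    (t r : ι → ℝ) (hr : ∀ i, 0 < r i)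
    (hdisj : Pairwise (Function.onFun Disjoint fun i => Set.Ioc (t i - r i ^ 2) (t i)))
    (Iinv : ι → Set ℝ)
    (hIinv : ∀ i, Iinv i ⊆ Set.Ioo (t i - 4 * r i ^ 2) (t i + 3 * r i ^ 2))
    (tm τm : ℝ)
    (hunion : (⋃ i, Set.Ioo (t i) (t i + 4 * r i ^ 2 / η)) = Set.Ioo tm τm) :
    (⋃ i, Iinv i) ⊆ Set.Ioo (tm - η * (τm - tm)) τm ∧
      volume (⋃ i, Iinv i)
        ≤ ENNReal.ofReal (1 + η) * volume (⋃ i, Set.Ioo (t i) (t i + 4 * r i ^ 2 / η)) :=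
  stmt17_general η hη t r hr Iinv hIinv tm τm hunion
end
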